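/- Let V be a vector space over K ∈ {ℝ, ℂ} with m := dim_K V < ∞, with a fixed complete flag {0} = V₀ ⊊ V₁ ⊊ ⋯ ⊊ V_m = V (dim V_j = j), and let p : (∧²V)* → Gr(V), p(B) := N(B₁) + ⋯ + N(B_m), where B_j := B|_{V_j × V_j}. If S ⊆ (∧²V)* is such that for every subset e ⊆ {1, …, m} the set S ∩ p⁻¹(Gr_e(V)) is relatively closed in S, then the mapping p|_S : S → Gr(V) is continuous. -/

import Mathlib

open Module Filter Topology
set_option linter.unusedSectionVars false

noncomputable section

variable {𝕜 : Type} [RCLike 𝕜]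

noncomputable instance grassmannianTopology {V : Type} [NormedAddCommGroup V]
    [InnerProductSpace 𝕜 V] [FiniteDimensional 𝕜 V] : TopologicalSpace (Submodule 𝕜 V) :=
  TopologicalSpace.induced
    (fun W : Submodule 𝕜 V => (W.subtypeL.comp W.orthogonalProjectionOnto : V →L[𝕜] V))
    inferInstance

variable {V : Type} [NormedAddCommGroup V] [InnerProductSpace 𝕜 V] [FiniteDimensional 𝕜 V]

/-- `B` is a skew-symmetric bilinear form. -/
def IsSkew (B : V →L[𝕜] V →L[𝕜] 𝕜) : Prop := ∀ x y, B x y = - B y x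

/-- `S^{⊥_B}`. -/
def perpB (B : V →L[𝕜] V →L[𝕜] 𝕜) (S : Submodule 𝕜 V) : Submodule 𝕜 V where
  carrier := {w | ∀ v ∈ S, B v w = 0}
  add_mem' := by
    intro a b ha hb v hv
    simp [map_add, ha v hv, hb v hv]
  zero_mem' := by
    intro v hv
    simp
  smul_mem' := by
    intro c w hw v hv
    simp [hw v hv]

/-- The null space `N(B)`. -/
def nullSpace (B : V →L[𝕜] V →L[𝕜] 𝕜) : Submodule 𝕜 V := perpB B ⊤

/-- `S ⊥_B T`. -/
def IsOrthoPair (B : V →L[𝕜] V →L[𝕜] 𝕜) (S T : Submodule 𝕜 V) : Prop :=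
  ∀ v ∈ S, ∀ w ∈ T, B v w = 0

/-- `W` is a `B`-isotropic subspace. -/
def IsIsotropic (B : V →L[𝕜] V →L[𝕜] 𝕜) (W : Submodule 𝕜 V) : Prop := IsOrthoPair B W W


/-- `N(B_j)`, the null space of the restriction of `B` to `W × W`, regarded as a subspace
of `V`. -/
def nullIn (B : V →L[𝕜] V →L[𝕜] 𝕜) (W : Submodule 𝕜 V) : Submodule 𝕜 V :=
  perpB B W ⊓ W

/-- The subspace `p(B) := N(B₁) + ⋯ + N(B_m)` associated to a complete flag. -/
def lagSum (m : ℕ) (Vf : Fin (m + 1) → Submodule 𝕜 V) (B : V →L[𝕜] V →L[𝕜] 𝕜) :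
    Submodule 𝕜 V :=
  ∑ j : Fin m, nullIn B (Vf j.succ)

/-- The jump set `jump W := {j ∈ {1, …, m} : V_j ⊄ V_{j-1} + W}` of a subspace `W`
relative to the complete flag `Vf`; the Schubert cell `Gr_e(V)` consists of the subspaces
whose jump set equals `e`. -/
def jumpSet (m : ℕ) (Vf : Fin (m + 1) → Submodule 𝕜 V) (W : Submodule 𝕜 V) : Set (Fin m) :=
  {j | ¬ Vf j.succ ≤ Vf j.castSucc ⊔ W}

-- basics
lemma mem_nullIn {B : V →L[𝕜] V →L[𝕜] 𝕜} {W : Submodule 𝕜 V} {w : V} :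
    w ∈ nullIn B W ↔ (∀ v ∈ W, B v w = 0) ∧ w ∈ W := Iff.rfl

lemma nullIn_le {B : V →L[𝕜] V →L[𝕜] 𝕜} {W : Submodule 𝕜 V} : nullIn B W ≤ W := inf_le_right

lemma IsSkew.self_eq_zero {B : V →L[𝕜] V →L[𝕜] 𝕜} (hB : IsSkew B) (x : V) : B x x = 0 := by
  have h := hB x x
  exact add_self_eq_zero.mp (add_eq_zero_iff_eq_neg.mpr h)

lemma nullIn_mono_of_le {B : V →L[𝕜] V →L[𝕜] 𝕜} {U U' : Submodule 𝕜 V} (h : U ≤ U') :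
    nullIn B U' ⊓ U ≤ nullIn B U := by
  rintro w ⟨⟨hw1, _⟩, hwU⟩
  exact ⟨fun v hv => hw1 v (h hv), hwU⟩

lemma finrank_sup_span_singleton {P : Submodule 𝕜 V} {w : V} (hw : w ∉ P) :
    finrank 𝕜 ↥(P ⊔ Submodule.span 𝕜 {w}) = finrank 𝕜 ↥P + 1 := by
  have hw0 : w ≠ 0 := fun h => hw (h ▸ P.zero_mem)
  have hinf : P ⊓ Submodule.span 𝕜 {w} = ⊥ := by
    rw [eq_bot_iff]
    rintro x ⟨hxP, hxs⟩
    obtain ⟨c, rfl⟩ := Submodule.mem_span_singleton.mp hxs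
    rcases eq_or_ne c 0 with rfl | hc
    · simp
    · exact absurd (by simpa using P.smul_mem c⁻¹ hxP) (by simp [hc, hw])
  have := Submodule.finrank_sup_add_finrank_inf_eq P (Submodule.span 𝕜 {w})
  rw [hinf] at this
  simp only [finrank_bot, add_zero] at this
  rw [this, finrank_span_singleton hw0]

-- extension of a subspace by one vector
lemma sup_span_eq_of_finrank {U U' : Submodule 𝕜 V} {w : V} (hle : U ≤ U')
    (hdim : finrank 𝕜 U' = finrank 𝕜 U + 1) (hwU' : w ∈ U') (hwU : w ∉ U) :
    U ⊔ Submodule.span 𝕜 {w} = U' := by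
  apply Submodule.eq_of_le_of_finrank_le
  · exact sup_le hle ((Submodule.span_singleton_le_iff_mem _ _).mpr hwU')
  · rw [hdim, finrank_sup_span_singleton hwU]

lemma finrank_range_flip {M M' : Type} [AddCommGroup M] [Module 𝕜 M] [AddCommGroup M']
    [Module 𝕜 M'] [FiniteDimensional 𝕜 M] [FiniteDimensional 𝕜 M']
    (g : M →ₗ[𝕜] (M' →ₗ[𝕜] 𝕜)) :
    finrank 𝕜 (LinearMap.range g.flip) = finrank 𝕜 (LinearMap.range g) := by
  have hcomp : g.flip = g.dualMap ∘ₗ (Module.Dual.eval 𝕜 M') := by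
    ext w v
    rfl
  rw [hcomp, LinearMap.range_comp_of_range_eq_top, LinearMap.finrank_range_dualMap_eq_finrank_range]
  rw [LinearMap.range_eq_top]
  rw [← Module.evalEquiv_toLinearMap]
  exact (Module.evalEquiv 𝕜 M').surjective

-- the restricted pairing
def pairRes (B : V →L[𝕜] V →L[𝕜] 𝕜) (U U' : Submodule 𝕜 V) : ↥U →ₗ[𝕜] ↥U' →ₗ[𝕜] 𝕜 :=
  LinearMap.mk₂ 𝕜 (fun v w => B (v : V) (w : V))
    (by intros; push_cast; simp) (by intros; push_cast; simp)
    (by intros; push_cast; simp) (by intros; push_cast; simp)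

lemma pairRes_apply (B : V →L[𝕜] V →L[𝕜] 𝕜) (U U' : Submodule 𝕜 V) (v : ↥U) (w : ↥U') :
    pairRes B U U' v w = B (v : V) (w : V) := rfl

lemma map_ker_pairRes (B : V →L[𝕜] V →L[𝕜] 𝕜) (hB : IsSkew B) (U U' : Submodule 𝕜 V) :
    (LinearMap.ker (pairRes B U U')).map U.subtype = perpB B U' ⊓ U := by
  ext x
  simp only [Submodule.mem_map, LinearMap.mem_ker, Submodule.mem_inf]
  constructor
  · rintro ⟨⟨v, hv⟩, hker, rfl⟩
    refine ⟨fun u hu => ?_, hv⟩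
    have h2 : B v u = 0 := by
      simpa [pairRes_apply] using LinearMap.congr_fun hker ⟨u, hu⟩
    show B u (U.subtype ⟨v, hv⟩) = 0
    simp only [Submodule.subtype_apply]
    rw [hB u v, h2, neg_zero]
  · rintro ⟨hperp, hxU⟩
    refine ⟨⟨x, hxU⟩, ?_, rfl⟩
    ext ⟨u, hu⟩
    simp only [pairRes, LinearMap.mk₂_apply, LinearMap.zero_apply]
    rw [hB x u, hperp u hu, neg_zero]

lemma map_ker_pairRes_flip (B : V →L[𝕜] V →L[𝕜] 𝕜) (U U' : Submodule 𝕜 V) :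
    (LinearMap.ker (pairRes B U U').flip).map U'.subtype = perpB B U ⊓ U' := by
  ext x
  simp only [Submodule.mem_map, LinearMap.mem_ker, Submodule.mem_inf]
  constructor
  · rintro ⟨⟨w, hw⟩, hker, rfl⟩
    refine ⟨fun u hu => ?_, hw⟩
    have h2 := LinearMap.congr_fun hker ⟨u, hu⟩
    simpa [LinearMap.flip_apply, pairRes_apply] using h2
  · rintro ⟨hperp, hxU'⟩
    refine ⟨⟨x, hxU'⟩, ?_, rfl⟩
    ext ⟨u, hu⟩
    simp only [LinearMap.flip_apply, pairRes_apply, LinearMap.zero_apply]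
    exact hperp u hu

/-- No "flat" steps: the null space genuinely changes along a one-step flag extension. -/
lemma noflat {B : V →L[𝕜] V →L[𝕜] 𝕜} (hB : IsSkew B) {U U' : Submodule 𝕜 V} (hle : U ≤ U')
    (hdim : finrank 𝕜 U' = finrank 𝕜 U + 1) (heq : nullIn B U' = nullIn B U) : False := by
  set N := nullIn B U with hN
  have hNU : N ≤ U := nullIn_le
  -- kernel of g
  have hkerg : (LinearMap.ker (pairRes B U U')).map U.subtype = N := by
    rw [map_ker_pairRes B hB U U']
    have : perpB B U' ⊓ U = (perpB B U' ⊓ U') ⊓ U := by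
      rw [inf_assoc]
      congr 1
      exact (inf_eq_right.mpr hle).symm
    rw [this]
    show nullIn B U' ⊓ U = N
    rw [heq, inf_eq_left.mpr hNU]
  -- kernel of f = flip g
  have hkerf : (LinearMap.ker (pairRes B U U').flip).map U'.subtype = N := by
    rw [map_ker_pairRes_flip B U U']
    apply le_antisymm
    · rintro w ⟨hperp, hwU'⟩
      by_cases hwU : w ∈ U
      · exact ⟨hperp, hwU⟩
      · exfalso
        have hsup := sup_span_eq_of_finrank hle hdim hwU' hwU
        have hwN' : w ∈ nullIn B U' := by
          refine ⟨fun u hu => ?_, hwU'⟩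
          rw [← hsup] at hu
          obtain ⟨u₀, hu₀, s, hs, rfl⟩ := Submodule.mem_sup.mp hu
          obtain ⟨c, rfl⟩ := Submodule.mem_span_singleton.mp hs
          simp [hperp u₀ hu₀, hB.self_eq_zero w]
        rw [heq] at hwN'
        exact hwU (hNU hwN')
    · intro w hw
      exact ⟨hw.1, hle hw.2⟩
  have h1 := LinearMap.finrank_range_add_finrank_ker (pairRes B U U')
  have h2 := LinearMap.finrank_range_add_finrank_ker (pairRes B U U').flip
  have hk1 : finrank 𝕜 (LinearMap.ker (pairRes B U U')) = finrank 𝕜 N := by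
    rw [← hkerg, Submodule.finrank_map_subtype_eq]
  have hk2 : finrank 𝕜 (LinearMap.ker (pairRes B U U').flip) = finrank 𝕜 N := by
    rw [← hkerf, Submodule.finrank_map_subtype_eq]
  have hr := finrank_range_flip (pairRes B U U')
  omega

/-- One-step dichotomy: along a one-dimensional flag extension, the null space either
grows by a line not contained in `U` ("up") or shrinks by one dimension ("down"). -/
lemma step_dichotomy {B : V →L[𝕜] V →L[𝕜] 𝕜} (hB : IsSkew B) {U U' : Submodule 𝕜 V}
    (hle : U ≤ U') (hdim : finrank 𝕜 U' = finrank 𝕜 U + 1) :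
    (¬ nullIn B U' ≤ U ∧ nullIn B U ≤ nullIn B U' ∧
      (∃ w, w ∈ nullIn B U' ∧ w ∉ U ∧ nullIn B U' = nullIn B U ⊔ Submodule.span 𝕜 {w}) ∧
      finrank 𝕜 (nullIn B U') = finrank 𝕜 (nullIn B U) + 1)
    ∨ (nullIn B U' ≤ U ∧ nullIn B U' ≤ nullIn B U ∧
      finrank 𝕜 (nullIn B U) = finrank 𝕜 (nullIn B U') + 1) := by
  set N := nullIn B U with hNdef
  set N' := nullIn B U' with hN'def
  have hNU : N ≤ U := nullIn_le
  have hN'U' : N' ≤ U' := nullIn_le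
  by_cases hc : N' ≤ U
  · right
    have hN'N : N' ≤ N := by
      intro w hw
      exact ⟨fun v hv => hw.1 v (hle hv), hc hw⟩
    refine ⟨hc, hN'N, ?_⟩
    have hne : N' ≠ N := fun h => noflat hB hle hdim h
    have hlt : finrank 𝕜 N' < finrank 𝕜 N :=
      Submodule.finrank_lt_finrank_of_lt (lt_of_le_of_ne hN'N hne)
    -- lower bound: kernel of the functional v ↦ B x v on N lands in N'
    obtain ⟨x, hxU', hxU⟩ : ∃ x ∈ U', x ∉ U := by
      by_contra h
      push_neg at h
      have : U' ≤ U := h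
      have := Submodule.finrank_mono this
      omega
    have hsup := sup_span_eq_of_finrank hle hdim hxU' hxU
    set φ : ↥N →ₗ[𝕜] 𝕜 := ((B x).toLinearMap).comp N.subtype with hφ
    have hkerφ : ∀ v : ↥N, v ∈ LinearMap.ker φ → (v : V) ∈ N' := by
      rintro ⟨v, hv⟩ hker
      simp only [LinearMap.mem_ker, hφ, LinearMap.comp_apply, Submodule.subtype_apply,
        ContinuousLinearMap.coe_coe] at hker
      refine ⟨fun u hu => ?_, hle hv.2⟩
      rw [← hsup] at hu
      obtain ⟨u₀, hu₀, s, hs, rfl⟩ := Submodule.mem_sup.mp hu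
      obtain ⟨c, rfl⟩ := Submodule.mem_span_singleton.mp hs
      simp [hv.1 u₀ hu₀, hker]
    have hrn := LinearMap.finrank_range_add_finrank_ker φ
    have hrange : finrank 𝕜 (LinearMap.range φ) ≤ 1 := by
      have := Submodule.finrank_le (LinearMap.range φ)
      simpa [finrank_self] using this
    have hmap : (LinearMap.ker φ).map N.subtype ≤ N' := by
      rintro _ ⟨v, hv, rfl⟩
      exact hkerφ v hv
    have hker_le : finrank 𝕜 (LinearMap.ker φ) ≤ finrank 𝕜 N' := by
      rw [← Submodule.finrank_map_subtype_eq N (LinearMap.ker φ)]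
      exact Submodule.finrank_mono hmap
    omega
  · left
    obtain ⟨w, hwN', hwU⟩ : ∃ w ∈ N', w ∉ U := by
      by_contra h
      push_neg at h
      exact hc h
    have hwU' : w ∈ U' := hN'U' hwN'
    have hsup := sup_span_eq_of_finrank hle hdim hwU' hwU
    have hNN' : N ≤ N' := by
      intro v hv
      refine ⟨fun u hu => ?_, hle hv.2⟩
      rw [← hsup] at hu
      obtain ⟨u₀, hu₀, s, hs, rfl⟩ := Submodule.mem_sup.mp hu
      obtain ⟨c, rfl⟩ := Submodule.mem_span_singleton.mp hs
      have hwv : B w v = 0 := by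
        rw [hB w v, hwN'.1 (v : V) (hle hv.2), neg_zero]
      simp [hv.1 u₀ hu₀, hwv]
    have hNsup : N' = N ⊔ Submodule.span 𝕜 {w} := by
      apply le_antisymm
      · intro z hz
        have hzU' : (z : V) ∈ U' := hN'U' hz
        rw [← hsup] at hzU'
        obtain ⟨u₀, hu₀, s, hs, rfl⟩ := Submodule.mem_sup.mp hzU'
        obtain ⟨c, rfl⟩ := Submodule.mem_span_singleton.mp hs
        have hu₀N' : u₀ ∈ N' := by
          have : u₀ = (u₀ + c • w) - c • w := by abel
          rw [this]
          exact Submodule.sub_mem _ hz (Submodule.smul_mem _ c hwN')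
        have hu₀N : u₀ ∈ N := ⟨fun v hv => hu₀N'.1 v (hle hv), hu₀⟩
        exact Submodule.add_mem _ (Submodule.mem_sup_left hu₀N)
          (Submodule.mem_sup_right (Submodule.smul_mem _ c (Submodule.mem_span_singleton_self w)))
      · exact sup_le hNN' ((Submodule.span_singleton_le_iff_mem _ _).mpr hwN')
    have hwN : w ∉ N := fun h => hwU (hNU h)
    refine ⟨hc, hNN', ⟨w, hwN', hwU, hNsup⟩, ?_⟩
    rw [hNsup, finrank_sup_span_singleton hwN]

def upSet (m : ℕ) (Vf : Fin (m + 1) → Submodule 𝕜 V) (B : V →L[𝕜] V →L[𝕜] 𝕜) : Set (Fin m) :=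
  {j | ¬ nullIn B (Vf j.succ) ≤ Vf j.castSucc}

open scoped Classical in
/-- cardinality of a set of indices -/
noncomputable def scard {m : ℕ} (s : Set (Fin m)) : ℕ := (Finset.univ.filter (· ∈ s)).card

open scoped Classical in
lemma scard_compl {m : ℕ} (s : Set (Fin m)) : scard s + scard sᶜ = m := by
  classical
  unfold scard
  have h2 := Finset.card_filter_add_card_filter_not
    (s := (Finset.univ : Finset (Fin m))) (p := (· ∈ s))
  rw [Finset.card_univ, Fintype.card_fin] at h2
  simpa [Set.mem_compl_iff, Finset.filter_congr_decidable] using h2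
  
section Flag

variable {m : ℕ} {Vf : Fin (m + 1) → Submodule 𝕜 V}

lemma flag_le (hmono : Monotone Vf) (j : Fin m) : Vf j.castSucc ≤ Vf j.succ :=
  hmono (Fin.castSucc_lt_succ (i := j)).le

lemma flag_dim (hrank : ∀ j, finrank 𝕜 (Vf j) = (j : ℕ)) (j : Fin m) :
    finrank 𝕜 (Vf j.succ) = finrank 𝕜 (Vf j.castSucc) + 1 := by
  rw [hrank, hrank, Fin.val_succ, Fin.coe_castSucc]

lemma finrank_sup_span_le (P : Submodule 𝕜 V) (x : V) :
    finrank 𝕜 ↥(P ⊔ Submodule.span 𝕜 {x}) ≤ finrank 𝕜 ↥P + 1 := by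
  by_cases hx : x ∈ P
  · rw [sup_eq_left.mpr ((Submodule.span_singleton_le_iff_mem _ _).mpr hx)]
    omega
  · rw [finrank_sup_span_singleton hx]

open scoped Classical in
/-- The cardinality of the jump set of `W` equals the codimension of `W`. -/
lemma jump_card (hmono : Monotone Vf) (hrank : ∀ j, finrank 𝕜 (Vf j) = (j : ℕ))
    (hbot : Vf 0 = ⊥) (htop : Vf (Fin.last m) = ⊤) (hm : finrank 𝕜 V = m)
    (W : Submodule 𝕜 V) :
    finrank 𝕜 W + scard (jumpSet m Vf W) = m := by
  classical
  set d : Fin (m + 1) → ℕ := fun k => finrank 𝕜 ↥(Vf k ⊔ W) with hd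
  have hstep : ∀ j : Fin m, d j.succ = d j.castSucc + (if j ∈ jumpSet m Vf W then 1 else 0) := by
    intro j
    by_cases hj : j ∈ jumpSet m Vf W
    · rw [if_pos hj]
      have hlt : Vf j.castSucc ⊔ W < Vf j.succ ⊔ W := by
        refine lt_of_le_of_ne (sup_le_sup_right (flag_le hmono j) W) (fun h => hj ?_)
        rw [h]
        exact le_sup_left
      have h1 : d j.castSucc < d j.succ := Submodule.finrank_lt_finrank_of_lt hlt
      -- upper bound
      obtain ⟨x, hxU', hxU⟩ : ∃ x ∈ Vf j.succ, x ∉ Vf j.castSucc := by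
        by_contra h
        push_neg at h
        have := Submodule.finrank_mono (show Vf j.succ ≤ Vf j.castSucc from h)
        have := flag_dim hrank j
        omega
      have hsup := sup_span_eq_of_finrank (flag_le hmono j) (flag_dim hrank j) hxU' hxU
      have h2 : d j.succ ≤ d j.castSucc + 1 := by
        have : Vf j.succ ⊔ W = (Vf j.castSucc ⊔ W) ⊔ Submodule.span 𝕜 {x} := by
          rw [← hsup]
          rw [sup_assoc, sup_comm (Submodule.span 𝕜 {x}) W, ← sup_assoc]
        rw [hd]
        simp only
        rw [this]
        exact finrank_sup_span_le _ x
      omega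
    · rw [if_neg hj, add_zero]
      have hle' : Vf j.succ ≤ Vf j.castSucc ⊔ W := not_not.mp (fun h => hj h)
      have : Vf j.succ ⊔ W = Vf j.castSucc ⊔ W :=
        le_antisymm (sup_le hle' le_sup_right) (sup_le_sup_right (flag_le hmono j) W)
      rw [hd]; simp only; rw [this]
  -- telescoping
  have hsum1 : ∑ i : Fin (m + 1), d i = d 0 + ∑ j : Fin m, d j.succ := Fin.sum_univ_succ d
  have hsum2 : ∑ i : Fin (m + 1), d i = (∑ j : Fin m, d j.castSucc) + d (Fin.last m) :=
    Fin.sum_univ_castSucc d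
  have hcard : scard (jumpSet m Vf W) =
      ∑ j : Fin m, (if j ∈ jumpSet m Vf W then 1 else 0) := by
    unfold scard
    rw [Finset.card_filter]
  have hsum3 : ∑ j : Fin m, d j.succ =
      (∑ j : Fin m, d j.castSucc) + scard (jumpSet m Vf W) := by
    rw [hcard, ← Finset.sum_add_distrib]
    exact Finset.sum_congr rfl (fun j _ => hstep j)
  have hd0 : d 0 = finrank 𝕜 W := by
    rw [hd]; simp only; rw [hbot, bot_sup_eq]
  have hdlast : d (Fin.last m) = m := by
    rw [hd]; simp only; rw [htop, top_sup_eq, finrank_top, hm]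
  omega

/-- Partial sums of null spaces along the flag. -/
noncomputable def psum (Vf : Fin (m + 1) → Submodule 𝕜 V) (B : V →L[𝕜] V →L[𝕜] 𝕜)
    (k : Fin (m + 1)) : Submodule 𝕜 V :=
  ∑ j ∈ Finset.univ.filter (fun j : Fin m => (j : ℕ) < (k : ℕ)), nullIn B (Vf j.succ)

lemma submodule_sum_le {ι : Type} (s : Finset ι) (f : ι → Submodule 𝕜 V) (X : Submodule 𝕜 V)
    (h : ∀ i ∈ s, f i ≤ X) : ∑ i ∈ s, f i ≤ X := by
  refine Finset.sum_induction f (· ≤ X) (fun a b ha hb => ?_) ?_ h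
  · rw [Submodule.add_eq_sup]
    exact sup_le ha hb
  · rw [Submodule.zero_eq_bot]
    exact bot_le

lemma le_submodule_sum {ι : Type} (s : Finset ι) (f : ι → Submodule 𝕜 V) {i : ι} (hi : i ∈ s) :
    f i ≤ ∑ j ∈ s, f j :=
  Finset.single_le_sum (fun j _ => zero_le) hi

lemma psum_le (hmono : Monotone Vf) (B : V →L[𝕜] V →L[𝕜] 𝕜) (k : Fin (m + 1)) :
    psum Vf B k ≤ Vf k := by
  refine submodule_sum_le _ _ _ ?_
  intro j hj
  rw [Finset.mem_filter] at hj
  refine le_trans nullIn_le (hmono ?_)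
  rw [Fin.le_def, Fin.val_succ]
  omega

lemma nullIn_le_psum (B : V →L[𝕜] V →L[𝕜] 𝕜) {j : Fin m} {k : Fin (m + 1)}
    (hjk : (j : ℕ) < (k : ℕ)) : nullIn B (Vf j.succ) ≤ psum Vf B k := by
  exact le_submodule_sum _ (fun j : Fin m => nullIn B (Vf j.succ))
    (Finset.mem_filter.mpr ⟨Finset.mem_univ j, hjk⟩)

lemma psum_succ (B : V →L[𝕜] V →L[𝕜] 𝕜) (k : Fin m) :
    psum Vf B k.succ = psum Vf B k.castSucc ⊔ nullIn B (Vf k.succ) := by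
  unfold psum
  have : (Finset.univ.filter (fun j : Fin m => (j : ℕ) < (k.succ : ℕ))) =
      insert k (Finset.univ.filter (fun j : Fin m => (j : ℕ) < (k.castSucc : ℕ))) := by
    ext j
    simp only [Finset.mem_filter, Finset.mem_insert, Finset.mem_univ, true_and, Fin.val_succ,
      Fin.coe_castSucc]
    constructor
    · intro h
      rcases Nat.lt_succ_iff_lt_or_eq.mp h with h | h
      · exact Or.inr h
      · exact Or.inl (Fin.ext h)
    · rintro (rfl | h)
      · omega
      · omega
  rw [this, Finset.sum_insert (by simp), Submodule.add_eq_sup, sup_comm]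

lemma psum_last (B : V →L[𝕜] V →L[𝕜] 𝕜) : psum Vf B (Fin.last m) = lagSum m Vf B := by
  unfold psum lagSum
  congr 1
  rw [Finset.filter_true_of_mem]
  intro j _
  rw [Fin.val_last]
  exact j.isLt


open scoped Classical in
lemma scard_mono {m : ℕ} {s t : Set (Fin m)} (h : s ⊆ t) : scard s ≤ scard t := by
  classical
  apply Finset.card_le_card
  intro j hj
  rw [Finset.mem_filter] at hj ⊢
  exact ⟨hj.1, h hj.2⟩

open scoped Classical in
lemma eq_of_subset_of_scard_le {m : ℕ} {s t : Set (Fin m)} (h : s ⊆ t)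
    (hc : scard t ≤ scard s) : s = t := by
  classical
  have hsub : Finset.univ.filter (· ∈ s) ⊆ Finset.univ.filter (· ∈ t) := by
    intro j hj
    rw [Finset.mem_filter] at hj ⊢
    exact ⟨hj.1, h hj.2⟩
  have := Finset.eq_of_subset_of_card_le hsub hc
  ext j
  constructor
  · exact fun hj => h hj
  · intro hj
    have : j ∈ Finset.univ.filter (· ∈ s) := by
      rw [this, Finset.mem_filter]
      exact ⟨Finset.mem_univ j, hj⟩
    exact (Finset.mem_filter.mp this).2

open scoped Classical in
/-- Main induction: the partial sums have dimension equal to the number of "up" steps. -/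
lemma psum_finrank (hmono : Monotone Vf) (hrank : ∀ j, finrank 𝕜 (Vf j) = (j : ℕ))
    (hbot : Vf 0 = ⊥) {B : V →L[𝕜] V →L[𝕜] 𝕜} (hB : IsSkew B) :
    ∀ k : Fin (m + 1),
      finrank 𝕜 (psum Vf B k) =
        (Finset.univ.filter (fun j : Fin m => (j : ℕ) < (k : ℕ) ∧ j ∈ upSet m Vf B)).card ∧
      nullIn B (Vf k) ≤ psum Vf B k := by
  classical
  intro k
  induction k using Fin.induction with
  | zero =>
    have hempty : (Finset.univ.filter (fun j : Fin m => (j : ℕ) < ((0 : Fin (m+1)) : ℕ))) =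
        (∅ : Finset (Fin m)) := by
      apply Finset.filter_false_of_mem
      intro j _
      simp
    have hpsum0 : psum Vf B 0 = ⊥ := by
      unfold psum
      rw [hempty, Finset.sum_empty, Submodule.zero_eq_bot]
    constructor
    · rw [hpsum0]
      rw [show (Finset.univ.filter (fun j : Fin m =>
          (j : ℕ) < ((0 : Fin (m+1)) : ℕ) ∧ j ∈ upSet m Vf B)) = ∅ from
        Finset.filter_false_of_mem (fun j _ => by simp)]
      simp [finrank_bot]
    · have hn0 : nullIn B (Vf 0) = ⊥ := by
        rw [hbot]
        exact le_bot_iff.mp nullIn_le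
      rw [hpsum0, hn0]
  | succ k IH =>
    obtain ⟨IH1, IH2⟩ := IH
    have hps := psum_succ (Vf := Vf) B k
    have hpsle := psum_le hmono B k.castSucc
    rcases step_dichotomy hB (flag_le hmono k) (flag_dim hrank k) with
      ⟨hnot, hNN', ⟨w, hwN', hwU, hNsup⟩, hrk⟩ | ⟨hle', hN'N, hrk⟩
    · -- up step
      have hkup : k ∈ upSet m Vf B := hnot
      have hwps : w ∉ psum Vf B k.castSucc := fun h => hwU (hpsle h)
      have hsum2 : psum Vf B k.succ = psum Vf B k.castSucc ⊔ Submodule.span 𝕜 {w} := by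
        rw [hps, hNsup, ← sup_assoc, sup_eq_left.mpr IH2]
      constructor
      · rw [hsum2, finrank_sup_span_singleton hwps, IH1]
        have hins : (Finset.univ.filter (fun j : Fin m =>
            (j : ℕ) < (k.succ : ℕ) ∧ j ∈ upSet m Vf B)) =
            insert k (Finset.univ.filter (fun j : Fin m =>
              (j : ℕ) < (k.castSucc : ℕ) ∧ j ∈ upSet m Vf B)) := by
          ext j
          simp only [Finset.mem_filter, Finset.mem_insert, Finset.mem_univ, true_and,
            Fin.val_succ, Fin.coe_castSucc]
          constructor
          · rintro ⟨hlt, hup⟩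
            rcases (by omega : (j : ℕ) < (k : ℕ) ∨ (j : ℕ) = (k : ℕ)) with h | h
            · exact Or.inr ⟨h, hup⟩
            · exact Or.inl (Fin.ext h)
          · rintro (rfl | ⟨h1, h2⟩)
            · exact ⟨by omega, hkup⟩
            · exact ⟨by omega, h2⟩
        rw [hins, Finset.card_insert_of_notMem (by simp)]
      · exact nullIn_le_psum B (by rw [Fin.val_succ]; omega)
    · -- down step
      have hkdown : k ∉ upSet m Vf B := fun h => h hle'
      have hsum2 : psum Vf B k.succ = psum Vf B k.castSucc := by
        rw [hps, sup_eq_left.mpr (le_trans hN'N IH2)]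
      constructor
      · rw [hsum2, IH1]
        congr 1
        ext j
        simp only [Finset.mem_filter, Finset.mem_univ, true_and, Fin.val_succ, Fin.coe_castSucc]
        constructor
        · rintro ⟨h1, h2⟩
          exact ⟨by omega, h2⟩
        · rintro ⟨hlt, hup⟩
          rcases (by omega : (j : ℕ) < (k : ℕ) ∨ (j : ℕ) = (k : ℕ)) with h | h
          · exact ⟨h, hup⟩
          · exact absurd hup (Fin.ext h ▸ hkdown)
      · exact nullIn_le_psum B (by rw [Fin.val_succ]; omega)

open scoped Classical in
lemma lagSum_finrank (hmono : Monotone Vf) (hrank : ∀ j, finrank 𝕜 (Vf j) = (j : ℕ))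
    (hbot : Vf 0 = ⊥) {B : V →L[𝕜] V →L[𝕜] 𝕜} (hB : IsSkew B) :
    finrank 𝕜 (lagSum m Vf B) = scard (upSet m Vf B) := by
  classical
  have h := (psum_finrank hmono hrank hbot hB (Fin.last m)).1
  rw [psum_last] at h
  rw [h]
  unfold scard
  congr 1
  ext j
  simp only [Finset.mem_filter, Finset.mem_univ, true_and, Fin.val_last]
  exact ⟨fun h => h.2, fun h => ⟨j.isLt, h⟩⟩

lemma nullIn_le_lagSum (B : V →L[𝕜] V →L[𝕜] 𝕜) (j : Fin m) :
    nullIn B (Vf j.succ) ≤ lagSum m Vf B :=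
  le_submodule_sum _ (fun j : Fin m => nullIn B (Vf j.succ)) (Finset.mem_univ j)

/-- The jump set of `lagSum B` is exactly the complement of the set of "up" steps. -/
lemma jump_lagSum_eq (hmono : Monotone Vf) (hrank : ∀ j, finrank 𝕜 (Vf j) = (j : ℕ))
    (hbot : Vf 0 = ⊥) (htop : Vf (Fin.last m) = ⊤) (hm : finrank 𝕜 V = m)
    {B : V →L[𝕜] V →L[𝕜] 𝕜} (hB : IsSkew B) :
    jumpSet m Vf (lagSum m Vf B) = (upSet m Vf B)ᶜ := by
  have hsub : jumpSet m Vf (lagSum m Vf B) ⊆ (upSet m Vf B)ᶜ := by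
    intro j hj
    rw [Set.mem_compl_iff]
    intro hup
    rcases step_dichotomy hB (flag_le hmono j) (flag_dim hrank j) with
      ⟨hnot, hNN', ⟨w, hwN', hwU, hNsup⟩, hrk⟩ | ⟨hle', hN'N, hrk⟩
    · apply hj
      have hwU' : w ∈ Vf j.succ := nullIn_le hwN'
      have hsup := sup_span_eq_of_finrank (flag_le hmono j) (flag_dim hrank j) hwU' hwU
      rw [← hsup]
      apply sup_le le_sup_left
      refine le_trans ?_ le_sup_right
      rw [Submodule.span_singleton_le_iff_mem]
      exact nullIn_le_lagSum B j hwN'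
    · exact hup hle'
  apply eq_of_subset_of_scard_le hsub
  have h1 := jump_card hmono hrank hbot htop hm (lagSum m Vf B)
  have h2 := lagSum_finrank hmono hrank hbot hB
  have h3 := scard_compl (upSet m Vf B)
  omega

/-- Within a Schubert cell, the dimensions of all the partial null spaces agree. -/
lemma finrank_nullIn_eq_of_jump_eq (hmono : Monotone Vf)
    (hrank : ∀ j, finrank 𝕜 (Vf j) = (j : ℕ)) (hbot : Vf 0 = ⊥) (htop : Vf (Fin.last m) = ⊤)
    (hm : finrank 𝕜 V = m) {B B' : V →L[𝕜] V →L[𝕜] 𝕜} (hB : IsSkew B) (hB' : IsSkew B')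
    (h : jumpSet m Vf (lagSum m Vf B) = jumpSet m Vf (lagSum m Vf B')) :
    ∀ k : Fin (m + 1), finrank 𝕜 (nullIn B (Vf k)) = finrank 𝕜 (nullIn B' (Vf k)) := by
  have hup : upSet m Vf B = upSet m Vf B' := by
    have h1 := jump_lagSum_eq hmono hrank hbot htop hm hB
    have h2 := jump_lagSum_eq hmono hrank hbot htop hm hB'
    rw [h1, h2] at h
    exact compl_injective h
  intro k
  induction k using Fin.induction with
  | zero =>
    have e1 : nullIn B (Vf 0) = ⊥ := le_bot_iff.mp (hbot ▸ (nullIn_le : nullIn B (Vf 0) ≤ Vf 0))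
    have e2 : nullIn B' (Vf 0) = ⊥ :=
      le_bot_iff.mp (hbot ▸ (nullIn_le : nullIn B' (Vf 0) ≤ Vf 0))
    rw [e1, e2]
  | succ k IH =>
    rcases step_dichotomy hB (flag_le hmono k) (flag_dim hrank k) with
      ⟨hnot, _, _, hrk⟩ | ⟨hle', _, hrk⟩
    · rcases step_dichotomy hB' (flag_le hmono k) (flag_dim hrank k) with
        ⟨hnot', _, _, hrk'⟩ | ⟨hle'', _, hrk'⟩
      · omega
      · have hk : k ∈ upSet m Vf B := hnot
        rw [hup] at hk
        exact absurd hle'' hk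
    · rcases step_dichotomy hB' (flag_le hmono k) (flag_dim hrank k) with
        ⟨hnot', _, _, hrk'⟩ | ⟨hle'', _, hrk'⟩
      · have hk : k ∈ upSet m Vf B' := hnot'
        rw [← hup] at hk
        exact absurd hle' hk
      · omega

end Flag

section Projections

open scoped InnerProductSpace

/-- The orthogonal projection onto `W` as an endomorphism of `V`. -/
noncomputable def Pop (W : Submodule 𝕜 V) : V →L[𝕜] V :=
  W.subtypeL.comp W.orthogonalProjectionOnto

lemma Pop_apply (W : Submodule 𝕜 V) (x : V) : Pop W x = (W.orthogonalProjectionOnto x : V) := rfl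

lemma Pop_mem (W : Submodule 𝕜 V) (x : V) : Pop W x ∈ W := (W.orthogonalProjectionOnto x).2

lemma Pop_eq_self {W : Submodule 𝕜 V} {x : V} (h : x ∈ W) : Pop W x = x := by
  exact Submodule.starProjection_eq_self_iff.mpr h

lemma Pop_comp_of_le {U W : Submodule 𝕜 V} (h : U ≤ W) : (Pop W).comp (Pop U) = Pop U := by
  ext x
  exact Pop_eq_self (h (Pop_mem U x))

lemma Pop_inner (W : Submodule 𝕜 V) (x y : V) : ⟪Pop W x, y⟫_𝕜 = ⟪x, Pop W y⟫_𝕜 :=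
  Submodule.inner_starProjection_left_eq_right W x y

lemma norm_Pop_le (W : Submodule 𝕜 V) : ‖Pop W‖ ≤ 1 := by
  refine ContinuousLinearMap.opNorm_le_bound _ zero_le_one (fun x => ?_)
  rw [Pop_apply, one_mul]
  have h1 : ‖(W.orthogonalProjectionOnto x : V)‖ = ‖W.orthogonalProjectionOnto x‖ := rfl
  rw [h1]
  calc ‖W.orthogonalProjectionOnto x‖ ≤ ‖W.orthogonalProjectionOnto‖ * ‖x‖ :=
        W.orthogonalProjectionOnto.le_opNorm x
    _ ≤ 1 * ‖x‖ := by
        have := Submodule.orthogonalProjectionOnto_norm_le (K := W)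
        have hx : (0:ℝ) ≤ ‖x‖ := norm_nonneg x
        nlinarith
    _ = ‖x‖ := one_mul _

/-- Trace of an orthogonal projection is the dimension of its range. -/
lemma trace_Pop (W : Submodule 𝕜 V) :
    LinearMap.trace 𝕜 V (Pop W : V →ₗ[𝕜] V) = (finrank 𝕜 W : 𝕜) := by
  have h1 : (Pop W : V →ₗ[𝕜] V) =
      (W.subtype).comp ((W.orthogonalProjectionOnto : V →L[𝕜] W) : V →ₗ[𝕜] W) := rfl
  rw [h1, LinearMap.trace_comp_comm']
  have h2 : ((W.orthogonalProjectionOnto : V →L[𝕜] W) : V →ₗ[𝕜] W).comp W.subtype =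
      LinearMap.id := by
    ext w
    simp [Submodule.orthogonalProjectionOnto_mem_subspace_eq_self]
  rw [h2, LinearMap.trace_id]

/-- A self-adjoint idempotent is the orthogonal projection onto its range. -/
lemma eq_Pop_of_idem_selfadj {Q : V →L[𝕜] V} (hidem : Q * Q = Q)
    (hsa : ∀ x y, ⟪Q x, y⟫_𝕜 = ⟪x, Q y⟫_𝕜) : Q = Pop (LinearMap.range (Q : V →ₗ[𝕜] V)) := by
  ext x
  symm
  rw [Pop_apply]
  refine (Submodule.eq_starProjection_of_mem_orthogonal (K := LinearMap.range (Q : V →ₗ[𝕜] V))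
    (u := x) (v := Q x) (LinearMap.mem_range_self (Q : V →ₗ[𝕜] V) x) ?_ : _)
  rw [Submodule.mem_orthogonal]
  rintro _ ⟨y, rfl⟩
  have hQQ : Q (Q x) = Q x := by
    have := congrArg (fun T : V →L[𝕜] V => T x) hidem
    simpa using this
  rw [ContinuousLinearMap.coe_coe, hsa y (x - Q x), map_sub, hQQ, sub_self, inner_zero_right]

end Projections

section KeyLimit

open scoped InnerProductSpace

lemma tendsto_apply_of_tendsto {T : ℕ → V →L[𝕜] V} {Q : V →L[𝕜] V}
    (h : Tendsto T atTop (𝓝 Q)) (x : V) : Tendsto (fun n => T n x) atTop (𝓝 (Q x)) :=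
  ((ContinuousLinearMap.apply 𝕜 V x).continuous.tendsto Q).comp h

lemma Pop_mul_of_le {U W : Submodule 𝕜 V} (h : U ≤ W) : Pop W * Pop U = Pop U :=
  Pop_comp_of_le h

/-- A limit of orthogonal projections is the orthogonal projection onto its range. -/
lemma limit_Pop {Wn : ℕ → Submodule 𝕜 V} {Q : V →L[𝕜] V}
    (hQ : Tendsto (fun n => Pop (Wn n)) atTop (𝓝 Q)) :
    Q = Pop (LinearMap.range (Q : V →ₗ[𝕜] V)) := by
  apply eq_Pop_of_idem_selfadj
  · have h1 : Tendsto (fun n => Pop (Wn n) * Pop (Wn n)) atTop (𝓝 (Q * Q)) := hQ.mul hQ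
    have h2 : (fun n => Pop (Wn n) * Pop (Wn n)) = fun n => Pop (Wn n) :=
      funext fun n => Pop_mul_of_le le_rfl
    rw [h2] at h1
    exact tendsto_nhds_unique h1 hQ
  · intro x y
    have hx := tendsto_apply_of_tendsto hQ x
    have hy := tendsto_apply_of_tendsto hQ y
    have h1 : Tendsto (fun n => (⟪Pop (Wn n) x, y⟫_𝕜)) atTop (𝓝 ⟪Q x, y⟫_𝕜) :=
      hx.inner tendsto_const_nhds
    have h2 : Tendsto (fun n => (⟪x, Pop (Wn n) y⟫_𝕜)) atTop (𝓝 ⟪x, Q y⟫_𝕜) :=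
      tendsto_const_nhds.inner hy
    have heq : (fun n => (⟪Pop (Wn n) x, y⟫_𝕜)) = fun n => ⟪x, Pop (Wn n) y⟫_𝕜 :=
      funext fun n => Pop_inner _ x y
    rw [heq] at h1
    exact tendsto_nhds_unique h1 h2

/-- The trace (i.e. the rank) passes to the limit. -/
lemma finrank_range_of_limit {Wn : ℕ → Submodule 𝕜 V} {Q : V →L[𝕜] V} {k : ℕ}
    (hQ : Tendsto (fun n => Pop (Wn n)) atTop (𝓝 Q))
    (hk : ∀ᶠ n in atTop, finrank 𝕜 (Wn n) = k) :
    finrank 𝕜 (LinearMap.range (Q : V →ₗ[𝕜] V)) = k := by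
  set tr : (V →L[𝕜] V) →ₗ[𝕜] 𝕜 :=
    (LinearMap.trace 𝕜 V).comp (ContinuousLinearMap.coeLM 𝕜) with htrdef
  have htr : Continuous tr := LinearMap.continuous_of_finiteDimensional _
  have htrPop : ∀ W : Submodule 𝕜 V, tr (Pop W) = (finrank 𝕜 W : 𝕜) := by
    intro W
    rw [htrdef]
    simp only [LinearMap.comp_apply]
    exact trace_Pop W
  have h1 : Tendsto (fun n => tr (Pop (Wn n))) atTop (𝓝 (tr Q)) := (htr.tendsto Q).comp hQ
  have h2 : (fun n => tr (Pop (Wn n))) =ᶠ[atTop] (fun _ => (k : 𝕜)) :=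
    hk.mono (fun n hn => by simp only; rw [htrPop, hn])
  have h3 : Tendsto (fun _ : ℕ => (k : 𝕜)) atTop (𝓝 (tr Q)) := h1.congr' h2
  have h4 : tr Q = (k : 𝕜) := tendsto_nhds_unique h3 tendsto_const_nhds
  have h5 : tr Q = (finrank 𝕜 (LinearMap.range (Q : V →ₗ[𝕜] V)) : 𝕜) := by
    conv_lhs => rw [limit_Pop hQ]
    exact htrPop _
  rw [h4] at h5
  exact_mod_cast h5.symm

variable {m : ℕ} {Vf : Fin (m + 1) → Submodule 𝕜 V}

/-- The key limit lemma: if `C n → B₀` within one Schubert cell, then the limit of the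
projections onto `lagSum (C n)` is the projection onto `lagSum B₀`. -/
lemma key_limit (hmono : Monotone Vf) (hrank : ∀ j, finrank 𝕜 (Vf j) = (j : ℕ))
    (hbot : Vf 0 = ⊥) (htop : Vf (Fin.last m) = ⊤) (hm : finrank 𝕜 V = m)
    {C : ℕ → V →L[𝕜] V →L[𝕜] 𝕜} {B₀ : V →L[𝕜] V →L[𝕜] 𝕜}
    (hC : Tendsto C atTop (𝓝 B₀)) (hskC : ∀ n, IsSkew (C n)) (hskB : IsSkew B₀)
    (hcell : ∀ᶠ n in atTop, jumpSet m Vf (lagSum m Vf (C n)) = jumpSet m Vf (lagSum m Vf B₀))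
    {Q : V →L[𝕜] V} {Qf : Fin m → (V →L[𝕜] V)}
    (hQ : Tendsto (fun n => Pop (lagSum m Vf (C n))) atTop (𝓝 Q))
    (hQf : ∀ j : Fin m, Tendsto (fun n => Pop (nullIn (C n) (Vf j.succ))) atTop (𝓝 (Qf j))) :
    Q = Pop (lagSum m Vf B₀) := by
  set k := finrank 𝕜 (lagSum m Vf B₀) with hkdef
  have hkn : ∀ᶠ n in atTop, finrank 𝕜 (lagSum m Vf (C n)) = k := by
    refine hcell.mono (fun n hn => ?_)
    have h1 := jump_card hmono hrank hbot htop hm (lagSum m Vf (C n))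
    have h2 := jump_card hmono hrank hbot htop hm (lagSum m Vf B₀)
    rw [hn] at h1
    omega
  have hQrange := limit_Pop hQ
  have hW : finrank 𝕜 (LinearMap.range (Q : V →ₗ[𝕜] V)) = k := finrank_range_of_limit hQ hkn
  have hZ : ∀ j : Fin m, (Qf j) = Pop (LinearMap.range (Qf j : V →ₗ[𝕜] V)) := fun j => limit_Pop (hQf j)
  have hZrank : ∀ j : Fin m,
      finrank 𝕜 (LinearMap.range (Qf j : V →ₗ[𝕜] V)) = finrank 𝕜 (nullIn B₀ (Vf j.succ)) := by
    intro j
    refine finrank_range_of_limit (hQf j) (hcell.mono fun n hn => ?_)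
    exact finrank_nullIn_eq_of_jump_eq hmono hrank hbot htop hm (hskC n) hskB hn j.succ
  have hZle : ∀ j : Fin m, LinearMap.range (Qf j : V →ₗ[𝕜] V) ≤ nullIn B₀ (Vf j.succ) := by
    intro j z hz
    have hz' : Qf j z = z := by rw [hZ j]; exact Pop_eq_self hz
    have hzt : Tendsto (fun n => Pop (nullIn (C n) (Vf j.succ)) z) atTop (𝓝 z) := by
      have := tendsto_apply_of_tendsto (hQf j) z
      rwa [hz'] at this
    refine mem_nullIn.mpr ⟨?_, ?_⟩
    · intro v hv
      have h0 : ∀ n, (C n) v (Pop (nullIn (C n) (Vf j.succ)) z) = 0 :=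
        fun n => (mem_nullIn.mp (Pop_mem (nullIn (C n) (Vf j.succ)) z)).1 v hv
      have hCv : Tendsto (fun n => (C n) v) atTop (𝓝 (B₀ v)) :=
        ((ContinuousLinearMap.apply 𝕜 (V →L[𝕜] 𝕜) v).continuous.tendsto B₀).comp hC
      have hlim : Tendsto (fun n => (C n) v (Pop (nullIn (C n) (Vf j.succ)) z)) atTop
          (𝓝 (B₀ v z)) :=
        (isBoundedBilinearMap_apply.continuous.tendsto (B₀ v, z)).comp (hCv.prodMk_nhds hzt)
      have hzero : Tendsto (fun _ : ℕ => (0 : 𝕜)) atTop (𝓝 (B₀ v z)) := by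
        refine hlim.congr (fun n => ?_)
        rw [h0 n]
      exact tendsto_nhds_unique hzero tendsto_const_nhds
    · have hmemn : ∀ n, Pop (nullIn (C n) (Vf j.succ)) z ∈ Vf j.succ :=
        fun n => nullIn_le (Pop_mem _ z)
      exact (Submodule.closed_of_finiteDimensional _).mem_of_tendsto hzt
        (Eventually.of_forall hmemn)
  have hZW : ∀ j : Fin m, LinearMap.range (Qf j : V →ₗ[𝕜] V) ≤ LinearMap.range (Q : V →ₗ[𝕜] V) := by
    intro j
    have hcomp : Q * (Qf j) = Qf j := by
      have h1 : Tendsto (fun n => Pop (lagSum m Vf (C n)) * Pop (nullIn (C n) (Vf j.succ)))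
          atTop (𝓝 (Q * Qf j)) := hQ.mul (hQf j)
      have h2 : (fun n => Pop (lagSum m Vf (C n)) * Pop (nullIn (C n) (Vf j.succ))) =
          fun n => Pop (nullIn (C n) (Vf j.succ)) :=
        funext fun n => Pop_mul_of_le (nullIn_le_lagSum (C n) j)
      rw [h2] at h1
      exact tendsto_nhds_unique h1 (hQf j)
    intro z hz
    have hz' : Qf j z = z := by rw [hZ j]; exact Pop_eq_self hz
    have hQz : Q z = z := by
      calc Q z = Q (Qf j z) := by rw [hz']
        _ = (Q * Qf j) z := rfl
        _ = Qf j z := by rw [hcomp]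
        _ = z := hz'
    exact ⟨z, hQz⟩
  have hNZ : ∀ j : Fin m, LinearMap.range (Qf j : V →ₗ[𝕜] V) = nullIn B₀ (Vf j.succ) := fun j =>
    Submodule.eq_of_le_of_finrank_le (hZle j) (le_of_eq (hZrank j).symm)
  have hlag : lagSum m Vf B₀ ≤ LinearMap.range (Q : V →ₗ[𝕜] V) := by
    refine submodule_sum_le _ _ _ (fun j _ => ?_)
    rw [← hNZ j]
    exact hZW j
  have hfinal : lagSum m Vf B₀ = LinearMap.range (Q : V →ₗ[𝕜] V) :=
    Submodule.eq_of_le_of_finrank_le hlag (by rw [hW])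
  rw [hQrange, ← hfinal]

end KeyLimit


set_option synthInstance.maxHeartbeats 1000000 in
set_option maxHeartbeats 1000000 in
/-- Let `{0} = V₀ ⊊ ⋯ ⊊ V_m = V` be a complete flag and
`p(B) := N(B₁) + ⋯ + N(B_m)` with `B_j := B|_{V_j × V_j}`. If `S ⊆ (∧²V)*` is such that
for every `e ⊆ {1, …, m}` the set `S ∩ p⁻¹(Gr_e(V))` is relatively closed in `S`, then
`p|_S : S → Gr(V)` is continuous. -/
theorem continuous_lagSum_of_schubert_cells_closed
    (m : ℕ) (hm : finrank 𝕜 V = m)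
    (Vf : Fin (m + 1) → Submodule 𝕜 V)
    (hbot : Vf 0 = ⊥) (htop : Vf (Fin.last m) = ⊤)
    (hmono : Monotone Vf) (hrank : ∀ j, finrank 𝕜 (Vf j) = (j : ℕ))
    (S : Set (V →L[𝕜] V →L[𝕜] 𝕜)) (hS : ∀ B ∈ S, IsSkew B)
    (hclosed : ∀ e : Set (Fin m),
      IsClosed {B : S | jumpSet m Vf (lagSum m Vf (B : V →L[𝕜] V →L[𝕜] 𝕜)) = e}) :
    Continuous (S.restrict (lagSum m Vf)) := by
  have hind : Topology.IsInducing
      (fun W : Submodule 𝕜 V =>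
        (W.subtypeL.comp W.orthogonalProjectionOnto : V →L[𝕜] V)) := ⟨rfl⟩
  rw [hind.continuous_iff]
  have hPop : (fun W : Submodule 𝕜 V =>
      (W.subtypeL.comp W.orthogonalProjectionOnto : V →L[𝕜] V)) = Pop := rfl
  rw [hPop]
  rw [continuous_iff_seqContinuous]
  intro Bs B₀ hBs
  set e₀ := jumpSet m Vf (lagSum m Vf (B₀ : V →L[𝕜] V →L[𝕜] 𝕜)) with he₀
  have hopen : IsOpen {B : S | jumpSet m Vf (lagSum m Vf (B : V →L[𝕜] V →L[𝕜] 𝕜)) = e₀} := by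
    rw [← isClosed_compl_iff]
    have hset : {B : S | jumpSet m Vf (lagSum m Vf (B : V →L[𝕜] V →L[𝕜] 𝕜)) = e₀}ᶜ =
        ⋃ (e : {e : Set (Fin m) // e ≠ e₀}),
          {B : S | jumpSet m Vf (lagSum m Vf (B : V →L[𝕜] V →L[𝕜] 𝕜)) = e.1} := by
      ext B
      simp only [Set.mem_compl_iff, Set.mem_setOf_eq, Set.mem_iUnion]
      constructor
      · intro h
        exact ⟨⟨jumpSet m Vf (lagSum m Vf (B : V →L[𝕜] V →L[𝕜] 𝕜)), h⟩, rfl⟩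
      · rintro ⟨⟨e, he⟩, hB⟩
        rw [hB]
        exact he
    rw [hset]
    exact isClosed_iUnion_of_finite (fun e => hclosed e.1)
  have hmem : B₀ ∈ {B : S | jumpSet m Vf (lagSum m Vf (B : V →L[𝕜] V →L[𝕜] 𝕜)) = e₀} := rfl
  have hev : ∀ᶠ n in atTop,
      jumpSet m Vf (lagSum m Vf ((Bs n : S) : V →L[𝕜] V →L[𝕜] 𝕜)) = e₀ :=
    hBs.eventually_mem (hopen.mem_nhds hmem)
  apply tendsto_of_subseq_tendsto
  intro ns hns
  haveI : ProperSpace ((V →L[𝕜] V) × (Fin m → (V →L[𝕜] V))) :=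
    FiniteDimensional.proper_rclike 𝕜 _
  set u : ℕ → (V →L[𝕜] V) × (Fin m → (V →L[𝕜] V)) := fun n =>
    (Pop (lagSum m Vf ((Bs (ns n) : S) : V →L[𝕜] V →L[𝕜] 𝕜)),
      fun j => Pop (nullIn ((Bs (ns n) : S) : V →L[𝕜] V →L[𝕜] 𝕜) (Vf j.succ))) with hu
  have hubd : ∀ n, u n ∈ Metric.closedBall (0 : (V →L[𝕜] V) × (Fin m → (V →L[𝕜] V))) 1 := by
    intro n
    rw [Metric.mem_closedBall, dist_zero_right, Prod.norm_def]
    refine max_le (norm_Pop_le _) ?_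
    exact (pi_norm_le_iff_of_nonneg zero_le_one).mpr fun j => norm_Pop_le _
  obtain ⟨a, _, ms, hms, hlim⟩ :=
    tendsto_subseq_of_bounded Metric.isBounded_closedBall hubd
  have hQ : Tendsto (fun n => (u (ms n)).1) atTop (𝓝 a.1) :=
    ((continuous_fst.tendsto a).comp hlim)
  have hQf : ∀ j : Fin m, Tendsto (fun n => (u (ms n)).2 j) atTop (𝓝 (a.2 j)) := fun j =>
    (((continuous_apply j).comp continuous_snd).tendsto a).comp hlim
  have hnm : Tendsto (fun n => ns (ms n)) atTop atTop := hns.comp hms.tendsto_atTop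
  set C : ℕ → V →L[𝕜] V →L[𝕜] 𝕜 := fun n => ((Bs (ns (ms n)) : S) : V →L[𝕜] V →L[𝕜] 𝕜) with hCdef
  have hCt : Tendsto C atTop (𝓝 (B₀ : V →L[𝕜] V →L[𝕜] 𝕜)) :=
    (continuous_subtype_val.tendsto B₀).comp (hBs.comp hnm)
  have hcell : ∀ᶠ n in atTop,
      jumpSet m Vf (lagSum m Vf (C n)) = jumpSet m Vf (lagSum m Vf (B₀ : V →L[𝕜] V →L[𝕜] 𝕜)) :=
    hnm.eventually hev
  have hkey : a.1 = Pop (lagSum m Vf (B₀ : V →L[𝕜] V →L[𝕜] 𝕜)) := by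
    refine key_limit hmono hrank hbot htop hm hCt (fun n => hS _ (Bs (ns (ms n))).2)
      (hS _ B₀.2) hcell (Q := a.1) (Qf := a.2) hQ (fun j => hQf j)
  refine ⟨ms, ?_⟩
  have hfun : (fun n => (Pop ∘ S.restrict (lagSum m Vf)) (Bs (ns (ms n)))) =
      fun n => (u (ms n)).1 := rfl
  show Tendsto (fun n => (Pop ∘ S.restrict (lagSum m Vf)) (Bs (ns (ms n)))) atTop
    (𝓝 ((Pop ∘ S.restrict (lagSum m Vf)) B₀))
  rw [hfun]
  have : (Pop ∘ S.restrict (lagSum m Vf)) B₀ = a.1 := by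
    rw [hkey]
    rfl
  rw [this]
  exact hQ
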